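/- Price soundness (Lemma 2): Let S be a labeled transition system with spectroscopy energy game G△ and attacker winning budgets Win_a. If φ ∈ Strat([p,Q]_a, e), then expr(φ) ≤ e and expr(φ) ∈ Win_a([p,Q]_a). -/

import Mathlib

/-! ### Energies and energy updates -/

/-- (Finite) energies: vectors in `ℕ^N`. -/
abbrev Energy (N : ℕ) := Fin N → ℕ

/-- Extended energies: vectors in `(ℕ ∪ {∞})^N`. -/
abbrev EnergyE (N : ℕ) := Fin N → ℕ∞

/-- Embedding of energies into extended energies. -/
def Energy.toE {N : ℕ} (e : Energy N) : EnergyE N := fun k => (e k : ℕ∞)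

/-- A component of an energy update: `-1`, `0`, or `min_D`. -/
inductive UpdComp (N : ℕ) : Type where
  | dec : UpdComp N
  | zero : UpdComp N
  | minOf (D : Finset (Fin N)) : UpdComp N
deriving DecidableEq

/-- An energy update: a vector of update components, where a `min_D`
component at index `k` must satisfy `k ∈ D`. -/
structure EnergyUpdate (N : ℕ) : Type where
  comp : Fin N → UpdComp N
  valid : ∀ k D, comp k = UpdComp.minOf D → k ∈ D

open Classical in
/-- Applying an energy update to an extended energy: component `k` becomes
`e k - 1`, `e k`, or `min_{d ∈ D} e d`; the result is undefined (`none`) if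
some component would become negative. -/
noncomputable def applyUpdE {N : ℕ} (e : EnergyE N) (u : EnergyUpdate N) :
    Option (EnergyE N) :=
  if ∀ k, u.comp k = UpdComp.dec → e k ≠ 0 then
    some (fun k =>
      match u.comp k with
      | UpdComp.dec => e k - 1
      | UpdComp.zero => e k
      | UpdComp.minOf D => (insert k D).inf' (Finset.insert_nonempty k D) e)
  else none

open Classical in
/-- Applying an energy update to a (finite) energy. -/
noncomputable def applyUpdN {N : ℕ} (e : Energy N) (u : EnergyUpdate N) :
    Option (Energy N) :=
  if ∀ k, u.comp k = UpdComp.dec → e k ≠ 0 then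
    some (fun k =>
      match u.comp k with
      | UpdComp.dec => e k - 1
      | UpdComp.zero => e k
      | UpdComp.minOf D => (insert k D).inf' (Finset.insert_nonempty k D) e)
  else none

/-! ### Declining energy games -/

/-- A declining `N`-dimensional energy game: positions (partitioned into defender
positions and attacker positions), moves, and a weight function assigning an
energy update to each move. -/
structure EnergyGame (N : ℕ) where
  Pos : Type
  defender : Pos → Prop
  move : Pos → Pos → Prop
  weight : Pos → Pos → EnergyUpdate N

/-- The attacker wins from position `g` with (extended) initial energy budget `e`:
inductive (attractor) characterization of the existence of an attacker winning
strategy.  (The attacker wins exactly the finite plays that get stuck at a defender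
position without the energy having become negative, so the attacker has a winning
strategy iff they can force the play into a stuck defender position in finitely
many steps while keeping all energy levels defined.) -/
inductive AttackerWins {N : ℕ} (G : EnergyGame N) : G.Pos → EnergyE N → Prop where
  | attack {g g' : G.Pos} {e e' : EnergyE N} :
      ¬ G.defender g → G.move g g' →
      applyUpdE e (G.weight g g') = some e' →
      AttackerWins G g' e' → AttackerWins G g e
  | defend {g : G.Pos} {e : EnergyE N} :
      G.defender g →
      (∀ g', G.move g g' → (applyUpdE e (G.weight g g')).isSome) →
      (∀ g' e', G.move g g' → applyUpdE e (G.weight g g') = some e' →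
        AttackerWins G g' e') →
      AttackerWins G g e
/-! ### The spectroscopy energy game -/

/-- Lifting of transition steps to sets of processes:
`stepSet step Q a = {q' | ∃ q ∈ Q, q →a q'}`. -/
def stepSet {P : Type} {Act : Type} (step : P → Act → P → Prop) (Q : Set P) (a : Act) :
    Set P := {q' | ∃ q ∈ Q, step q a q'}

/-- The actions enabled initially for a process `p`: `I(p)`. -/
def enabledActs {P : Type} {Act : Type} (step : P → Act → P → Prop) (p : P) : Set Act :=
  {a | ∃ p', step p a p'}

/-- Positions of the spectroscopy energy game: attacker positions `[p,Q]_a`,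
attacker clause positions `[p,q]_a^∧`, and defender positions `(p,Q,Q*)_d`. -/
inductive SpecPos (P : Type) : Type where
  | att (p : P) (Q : Set P)
  | attConj (p q : P)
  | defp (p : P) (Q Qs : Set P)

/-- Update `(-1,0,0,0,0,0)` of observation moves. -/
def uObs : EnergyUpdate 6 :=
  ⟨![.dec, .zero, .zero, .zero, .zero, .zero], by decide⟩

/-- Update `(0,-1,0,0,0,0)` of conjunction challenges. -/
def uConj : EnergyUpdate 6 :=
  ⟨![.zero, .dec, .zero, .zero, .zero, .zero], by decide⟩

/-- Update `(min_{1,3},0,0,0,0,0)` of conjunction revivals. -/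
def uRevival : EnergyUpdate 6 :=
  ⟨![.minOf {0, 2}, .zero, .zero, .zero, .zero, .zero], by decide⟩

/-- Update `(0,0,0,min_{3,4},0,0)` of conjunction answers. -/
def uAnswer : EnergyUpdate 6 :=
  ⟨![.zero, .zero, .zero, .minOf {2, 3}, .zero, .zero], by decide⟩

/-- Update `(min_{1,4},0,0,0,0,0)` of positive decisions. -/
def uPos : EnergyUpdate 6 :=
  ⟨![.minOf {0, 3}, .zero, .zero, .zero, .zero, .zero], by decide⟩

/-- Update `(min_{1,5},0,0,0,0,-1)` of negative decisions. -/
def uNeg : EnergyUpdate 6 :=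
  ⟨![.minOf {0, 4}, .zero, .zero, .zero, .zero, .dec], by decide⟩

/-- The moves of the spectroscopy energy game `G△`. -/
inductive SpecMove {P : Type} {Act : Type} (step : P → Act → P → Prop) :
    SpecPos P → SpecPos P → Prop where
  | obs {p p' : P} {Q : Set P} {a : Act} :
      step p a p' →
      SpecMove step (.att p Q) (.att p' (stepSet step Q a))
  | conjChallenge {p : P} {Q Qs : Set P} :
      Qs ⊆ Q →
      SpecMove step (.att p Q) (.defp p (Q \ Qs) Qs)
  | conjRevival {p : P} {Q Qs : Set P} :
      Qs ≠ ∅ →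
      SpecMove step (.defp p Q Qs) (.att p Qs)
  | conjAnswer {p q : P} {Q Qs : Set P} :
      q ∈ Q →
      SpecMove step (.defp p Q Qs) (.attConj p q)
  | posDecision {p q : P} :
      SpecMove step (.attConj p q) (.att p {q})
  | negDecision {p q : P} :
      p ≠ q →
      SpecMove step (.attConj p q) (.att q {p})

/-- The moves of the clever spectroscopy game `G▲`: like `SpecMove`, with conjunction
challenges restricted to the four subsets
`∅`, `{q ∈ Q | I(q) ⊆ I(p)}`, `{q ∈ Q | I(p) ⊆ I(q)}`, `{q ∈ Q | I(p) = I(q)}`. -/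
inductive CleverMove {P : Type} {Act : Type} (step : P → Act → P → Prop) :
    SpecPos P → SpecPos P → Prop where
  | obs {p p' : P} {Q : Set P} {a : Act} :
      step p a p' →
      CleverMove step (.att p Q) (.att p' (stepSet step Q a))
  | conjChallenge {p : P} {Q Qs : Set P} :
      (Qs = ∅ ∨
       Qs = {q ∈ Q | enabledActs step q ⊆ enabledActs step p} ∨
       Qs = {q ∈ Q | enabledActs step p ⊆ enabledActs step q} ∨
       Qs = {q ∈ Q | enabledActs step p = enabledActs step q}) →
      CleverMove step (.att p Q) (.defp p (Q \ Qs) Qs)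
  | conjRevival {p : P} {Q Qs : Set P} :
      Qs ≠ ∅ →
      CleverMove step (.defp p Q Qs) (.att p Qs)
  | conjAnswer {p q : P} {Q Qs : Set P} :
      q ∈ Q →
      CleverMove step (.defp p Q Qs) (.attConj p q)
  | posDecision {p q : P} :
      CleverMove step (.attConj p q) (.att p {q})
  | negDecision {p q : P} :
      p ≠ q →
      CleverMove step (.attConj p q) (.att q {p})

open Classical in
/-- The weight function of the spectroscopy energy game (well-defined on all moves). -/
noncomputable def specWeight {P : Type} : SpecPos P → SpecPos P → EnergyUpdate 6
  | .att _ _, .att _ _ => uObs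
  | .att _ _, .defp _ _ _ => uConj
  | .defp _ _ _, .att _ _ => uRevival
  | .defp _ _ _, .attConj _ _ => uAnswer
  | .attConj p _, .att p' _ => if p = p' then uPos else uNeg
  | _, _ => uObs

/-- The spectroscopy energy game `G△` of a labeled transition system. -/
noncomputable def specGame {P : Type} {Act : Type} (step : P → Act → P → Prop) :
    EnergyGame 6 where
  Pos := SpecPos P
  defender g := ∃ p Q Qs, g = SpecPos.defp p Q Qs
  move := SpecMove step
  weight := specWeight

/-- The clever spectroscopy energy game `G▲` of a labeled transition system. -/
noncomputable def cleverGame {P : Type} {Act : Type} (step : P → Act → P → Prop) :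
    EnergyGame 6 where
  Pos := SpecPos P
  defender g := ∃ p Q Qs, g = SpecPos.defp p Q Qs
  move := CleverMove step
  weight := specWeight
/-! ### Hennessy–Milner logic -/

/-- Hennessy–Milner logic over actions `Act`: observations `⟨a⟩φ` and finite
conjunctions `⋀ {ψ_i}` whose clauses are positive (`poss`) or negated (`negs`)
formulas. -/
inductive HML (Act : Type) : Type where
  | obs (a : Act) (φ : HML Act)
  | conj (poss : List (HML Act)) (negs : List (HML Act))

/-- HML semantics: `HML.sat step φ p` means `p ⊨ φ`. -/
def HML.sat {P : Type} {Act : Type} (step : P → Act → P → Prop) :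
    HML Act → P → Prop
  | .obs a φ, p => ∃ p', step p a p' ∧ HML.sat step φ p'
  | .conj poss negs, p =>
      (∀ φ ∈ poss, HML.sat step φ p) ∧ (∀ φ ∈ negs, ¬ HML.sat step φ p)

/-- `φ` distinguishes `p` from `q`: `p ⊨ φ` and `q ⊭ φ`. -/
def distinguishes {P : Type} {Act : Type} (step : P → Act → P → Prop)
    (φ : HML Act) (p q : P) : Prop :=
  φ.sat step p ∧ ¬ φ.sat step q

/-- Maximum (supremum) of a list of naturals, `0` for the empty list. -/
def listMax (l : List ℕ) : ℕ := l.foldr max 0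

/-- Supremum of a list of naturals after removing one maximal element
(the "other positive clauses" in the pricing). -/
def supErase (l : List ℕ) : ℕ := listMax (l.erase (listMax l))

mutual
/-- The expressiveness price `expr : HML → ℕ^6` of a formula.
Components (0-indexed): 0 — modal depth; 1 — nesting depth of conjunctions;
2 — modal depth of the deepest positive clauses; 3 — modal depth of the other
positive clauses; 4 — modal depth of negative clauses; 5 — nesting depth of
negations. -/
def HML.expr {Act : Type} : HML Act → Energy 6
  | .obs _ φ => fun k => HML.expr φ k + (if k = 0 then 1 else 0)
  | .conj poss negs =>
      let pe := exprList poss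
      let ne := exprList negs
      -- prices of the clauses (a negated clause adds 1 to component 5)
      let clauseE : List (Energy 6) :=
        pe ++ ne.map (fun v => fun k => v k + (if k = 5 then 1 else 0))
      let base : Energy 6 := fun k =>
        if k = 1 then 1 + listMax (clauseE.map (fun v => v 1))
        else if k = 2 then listMax (pe.map (fun v => v 0))
        else if k = 3 then supErase (pe.map (fun v => v 0))
        else if k = 4 then listMax (ne.map (fun v => v 0))
        else 0
      fun k => max (base k) (listMax (clauseE.map (fun v => v k)))

/-- Prices of a list of formulas. -/
def exprList {Act : Type} : List (HML Act) → List (Energy 6)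
  | [] => []
  | φ :: l => HML.expr φ :: exprList l
end

/-- The expressiveness price as an extended energy. -/
def HML.exprE {Act : Type} (φ : HML Act) : EnergyE 6 := (HML.expr φ).toE
/-! ### Strategy formulas -/

/-- A clause of an HML conjunction: a positive or a negated formula. -/
inductive HMLClause (Act : Type) : Type where
  | pos (φ : HML Act)
  | neg (φ : HML Act)

/-- The conjunction formula `⋀ l` built from a list of clauses. -/
def clausesConj {Act : Type} (l : List (HMLClause Act)) : HML Act :=
  HML.conj
    (l.filterMap fun c => match c with | .pos φ => some φ | .neg _ => none)
    (l.filterMap fun c => match c with | .neg φ => some φ | .pos _ => none)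

/-- `φ` is an observation formula `⟨a⟩…`. -/
def HML.isObs {Act : Type} : HML Act → Prop
  | .obs _ _ => True
  | _ => False

mutual
/-- Attacker strategy formulas `Strat g e φ` (for given attacker winning budgets
`Win`), at attacker positions `[p,Q]_a` and defender positions `(p,Q,Q*)_d`. -/
inductive Strat {P : Type} {Act : Type} (step : P → Act → P → Prop)
    (Win : SpecPos P → EnergyE 6 → Prop) :
    SpecPos P → EnergyE 6 → HML Act → Prop where
  | obs {p p' : P} {Q : Set P} {a : Act} {e e' : EnergyE 6} {φ : HML Act} :
      step p a p' →
      applyUpdE e uObs = some e' →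
      Win (.att p' (stepSet step Q a)) e' →
      Strat step Win (.att p' (stepSet step Q a)) e' φ →
      Strat step Win (.att p Q) e (.obs a φ)
  | conj {p : P} {Q Qs : Set P} {e e' : EnergyE 6} {φ : HML Act} :
      Qs ⊆ Q →
      applyUpdE e uConj = some e' →
      Win (.defp p (Q \ Qs) Qs) e' →
      Strat step Win (.defp p (Q \ Qs) Qs) e' φ →
      Strat step Win (.att p Q) e φ
  | defEmpty {p : P} {Q : Set P} {e e' : EnergyE 6} (hQ : Q.Finite)
      (ψ : P → HMLClause Act) :
      applyUpdE e uAnswer = some e' →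
      (∀ q, q ∈ Q → Win (.attConj p q) e') →
      (∀ q, q ∈ Q → StratClause step Win (.attConj p q) e' (ψ q)) →
      Strat step Win (.defp p Q ∅) e (clausesConj (hQ.toFinset.toList.map ψ))
  | defRevival {p : P} {Q Qs : Set P} {e e' estar : EnergyE 6} (hQ : Q.Finite)
      (ψ : P → HMLClause Act) {φstar : HML Act} :
      Qs ≠ ∅ →
      applyUpdE e uAnswer = some e' →
      (∀ q, q ∈ Q → Win (.attConj p q) e') →
      (∀ q, q ∈ Q → StratClause step Win (.attConj p q) e' (ψ q)) →
      applyUpdE e uRevival = some estar →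
      Win (.att p Qs) estar →
      Strat step Win (.att p Qs) estar φstar →
      φstar.isObs →
      Strat step Win (.defp p Q Qs) e
        (clausesConj (HMLClause.pos φstar :: hQ.toFinset.toList.map ψ))

/-- Attacker strategy clauses at attacker clause positions `[p,q]_a^∧`. -/
inductive StratClause {P : Type} {Act : Type} (step : P → Act → P → Prop)
    (Win : SpecPos P → EnergyE 6 → Prop) :
    SpecPos P → EnergyE 6 → HMLClause Act → Prop where
  | pos {p q : P} {e e' : EnergyE 6} {φ : HML Act} :
      applyUpdE e uPos = some e' →
      Win (.att p {q}) e' →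
      Strat step Win (.att p {q}) e' φ →
      φ.isObs →
      StratClause step Win (.attConj p q) e (.pos φ)
  | neg {p q : P} {e e' : EnergyE 6} {φ : HML Act} :
      p ≠ q →
      applyUpdE e uNeg = some e' →
      Win (.att q {p}) e' →
      Strat step Win (.att q {p}) e' φ →
      φ.isObs →
      StratClause step Win (.attConj p q) e (.neg φ)
end


section Helpers

/-! #### listMax / supErase lemmas -/

lemma listMax_cons (a : ℕ) (l : List ℕ) : listMax (a :: l) = max a (listMax l) := rfl

lemma listMax_le {l : List ℕ} {b : ℕ} (h : ∀ x ∈ l, x ≤ b) : listMax l ≤ b := by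
  induction l with
  | nil => exact Nat.zero_le b
  | cons a t ih =>
      rw [listMax_cons]
      exact max_le (h a (by simp)) (ih fun x hx => h x (by simp [hx]))

lemma le_listMax {x : ℕ} {l : List ℕ} (h : x ∈ l) : x ≤ listMax l := by
  induction l with
  | nil => simp at h
  | cons a t ih =>
      rw [listMax_cons]
      rcases List.mem_cons.mp h with h | h
      · exact h ▸ le_max_left _ _
      · exact le_trans (ih h) (le_max_right _ _)

lemma listMax_mem {l : List ℕ} (h : l ≠ []) : listMax l ∈ l := by
  induction l with
  | nil => simp at h
  | cons a t ih =>
      rw [listMax_cons]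
      rcases eq_or_ne t [] with rfl | ht
      · simp [listMax]
      · rcases max_choice a (listMax t) with h' | h' <;> rw [h']
        · simp
        · exact List.mem_cons_of_mem _ (ih ht)

lemma supErase_le_listMax (l : List ℕ) : supErase l ≤ listMax l :=
  listMax_le fun x hx => le_listMax (List.mem_of_mem_erase hx)

lemma supErase_cons_le {rest : List ℕ} {b : ℕ} (a : ℕ) (h : ∀ x ∈ rest, x ≤ b) :
    supErase (a :: rest) ≤ b := by
  rcases le_total (listMax rest) a with h1 | h1
  · unfold supErase
    rw [listMax_cons, max_eq_left h1, List.erase_cons_head]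
    exact listMax_le h
  · refine listMax_le fun x hx => ?_
    have hx' : x ∈ a :: rest := List.mem_of_mem_erase hx
    rcases List.mem_cons.mp hx' with rfl | hx'
    · exact le_trans h1 (listMax_le h)
    · exact h x hx'

lemma le_supErase_of_split {l₁ l₂ : List ℕ} {a x : ℕ}
    (ha : ∀ y ∈ l₁ ++ a :: l₂, y ≤ a) (hx : x ∈ l₁ ++ l₂) :
    x ≤ supErase (l₁ ++ a :: l₂) := by
  have hmax : listMax (l₁ ++ a :: l₂) = a :=
    le_antisymm (listMax_le ha) (le_listMax (by simp))
  unfold supErase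
  rw [hmax]
  refine le_listMax ?_
  by_cases hal : a ∈ l₁
  · rw [List.erase_append_left _ hal]
    rcases List.mem_append.mp hx with hx | hx
    · by_cases hxa : x = a
      · subst hxa; simp
      · exact List.mem_append.mpr (Or.inl ((List.mem_erase_of_ne hxa).mpr hx))
    · simp [hx]
  · rw [List.erase_append_right _ hal, List.erase_cons_head]
    exact hx

/-! #### cast helpers for `ℕ∞` -/

lemma castMax_le {a b : ℕ} {x : ℕ∞} (ha : (a : ℕ∞) ≤ x) (hb : (b : ℕ∞) ≤ x) :
    ((max a b : ℕ) : ℕ∞) ≤ x := by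
  rcases max_choice a b with h | h <;> rw [h] <;> assumption

lemma castListMax_le {l : List ℕ} {x : ℕ∞} (h : ∀ a ∈ l, (a : ℕ∞) ≤ x) :
    ((listMax l : ℕ) : ℕ∞) ≤ x := by
  rcases eq_or_ne l [] with rfl | hl
  · show ((0:ℕ) : ℕ∞) ≤ x
    simp
  · exact h _ (listMax_mem hl)

lemma le_castListMax {a : ℕ} {l : List ℕ} (h : a ∈ l) :
    (a : ℕ∞) ≤ ((listMax l : ℕ) : ℕ∞) :=
  Nat.cast_le.mpr (le_listMax h)

end Helpers
section Updates

/-! #### Characterizations of `applyUpdE` for the concrete updates -/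

lemma applyUpdE_uAnswer (e : EnergyE 6) : applyUpdE e uAnswer =
    some (fun k => if k = 3 then min (e 2) (e 3) else e k) := by
  unfold applyUpdE
  rw [if_pos]
  · congr 1
    funext k
    fin_cases k
    · rfl
    · rfl
    · rfl
    · show Finset.inf' (insert (3:Fin 6) ({2,3} : Finset (Fin 6))) (Finset.insert_nonempty _ _) e = _
      rw [Finset.inf'_eq_inf]
      simp [Finset.inf_insert, Finset.inf_singleton, inf_comm, inf_left_comm, inf_assoc]
    · rfl
    · rfl
  · intro k hk
    revert hk
    fin_cases k <;> (intro hk; exact absurd hk (by decide))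

lemma applyUpdE_uRevival (e : EnergyE 6) : applyUpdE e uRevival =
    some (fun k => if k = 0 then min (e 0) (e 2) else e k) := by
  unfold applyUpdE
  rw [if_pos]
  · congr 1
    funext k
    fin_cases k
    · show Finset.inf' (insert (0:Fin 6) ({0,2} : Finset (Fin 6))) (Finset.insert_nonempty _ _) e = _
      rw [Finset.inf'_eq_inf]
      simp [Finset.inf_insert, Finset.inf_singleton, inf_comm, inf_left_comm, inf_assoc]
    · rfl
    · rfl
    · rfl
    · rfl
    · rfl
  · intro k hk
    revert hk
    fin_cases k <;> (intro hk; exact absurd hk (by decide))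

lemma applyUpdE_uPos (e : EnergyE 6) : applyUpdE e uPos =
    some (fun k => if k = 0 then min (e 0) (e 3) else e k) := by
  unfold applyUpdE
  rw [if_pos]
  · congr 1
    funext k
    fin_cases k
    · show Finset.inf' (insert (0:Fin 6) ({0,3} : Finset (Fin 6))) (Finset.insert_nonempty _ _) e = _
      rw [Finset.inf'_eq_inf]
      simp [Finset.inf_insert, Finset.inf_singleton, inf_comm, inf_left_comm, inf_assoc]
    · rfl
    · rfl
    · rfl
    · rfl
    · rfl
  · intro k hk
    revert hk
    fin_cases k <;> (intro hk; exact absurd hk (by decide))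

lemma applyUpdE_uObs {e : EnergyE 6} (h : e 0 ≠ 0) : applyUpdE e uObs =
    some (fun k => if k = 0 then e 0 - 1 else e k) := by
  unfold applyUpdE
  rw [if_pos]
  · congr 1
    funext k
    fin_cases k <;> rfl
  · intro k hk
    revert hk
    fin_cases k
    · intro _; exact h
    all_goals (intro hk; exact absurd hk (by decide))

lemma applyUpdE_uObs_inv {e e' : EnergyE 6} (h : applyUpdE e uObs = some e') :
    e 0 ≠ 0 ∧ e' = fun k => if k = 0 then e 0 - 1 else e k := by
  have h0 : e 0 ≠ 0 := by
    by_contra h0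
    unfold applyUpdE at h
    rw [if_neg] at h
    · cases h
    · intro hall
      exact hall 0 (by decide) h0
  refine ⟨h0, ?_⟩
  rw [applyUpdE_uObs h0] at h
  exact (Option.some.injEq _ _).mp h |>.symm

lemma applyUpdE_uConj {e : EnergyE 6} (h : e 1 ≠ 0) : applyUpdE e uConj =
    some (fun k => if k = 1 then e 1 - 1 else e k) := by
  unfold applyUpdE
  rw [if_pos]
  · congr 1
    funext k
    fin_cases k <;> rfl
  · intro k hk
    revert hk
    fin_cases k
    · intro hk; exact absurd hk (by decide)
    · intro _; exact h
    all_goals (intro hk; exact absurd hk (by decide))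

lemma applyUpdE_uConj_inv {e e' : EnergyE 6} (h : applyUpdE e uConj = some e') :
    e 1 ≠ 0 ∧ e' = fun k => if k = 1 then e 1 - 1 else e k := by
  have h0 : e 1 ≠ 0 := by
    by_contra h0
    unfold applyUpdE at h
    rw [if_neg] at h
    · cases h
    · intro hall
      exact hall 1 (by decide) h0
  refine ⟨h0, ?_⟩
  rw [applyUpdE_uConj h0] at h
  exact (Option.some.injEq _ _).mp h |>.symm

lemma applyUpdE_uNeg {e : EnergyE 6} (h : e 5 ≠ 0) : applyUpdE e uNeg =
    some (fun k => if k = 0 then min (e 0) (e 4) else if k = 5 then e 5 - 1 else e k) := by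
  unfold applyUpdE
  rw [if_pos]
  · congr 1
    funext k
    fin_cases k
    · show Finset.inf' (insert (0:Fin 6) ({0,4} : Finset (Fin 6))) (Finset.insert_nonempty _ _) e = _
      rw [Finset.inf'_eq_inf]
      simp [Finset.inf_insert, Finset.inf_singleton, inf_comm, inf_left_comm, inf_assoc]
    · rfl
    · rfl
    · rfl
    · rfl
    · rfl
  · intro k hk
    revert hk
    fin_cases k
    · intro hk; exact absurd hk (by decide)
    · intro hk; exact absurd hk (by decide)
    · intro hk; exact absurd hk (by decide)
    · intro hk; exact absurd hk (by decide)
    · intro hk; exact absurd hk (by decide)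
    · intro _; exact h

lemma applyUpdE_uNeg_inv {e e' : EnergyE 6} (h : applyUpdE e uNeg = some e') :
    e 5 ≠ 0 ∧ e' = fun k => if k = 0 then min (e 0) (e 4) else if k = 5 then e 5 - 1 else e k := by
  have h0 : e 5 ≠ 0 := by
    by_contra h0
    unfold applyUpdE at h
    rw [if_neg] at h
    · cases h
    · intro hall
      exact hall 5 (by decide) h0
  refine ⟨h0, ?_⟩
  rw [applyUpdE_uNeg h0] at h
  exact (Option.some.injEq _ _).mp h |>.symm

/-! #### Monotonicity of updates and of attacker winning -/

lemma applyUpdE_mono {N : ℕ} {e f : EnergyE N} {u : EnergyUpdate N} (hef : e ≤ f) {e' : EnergyE N}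
    (h : applyUpdE e u = some e') : ∃ f', applyUpdE f u = some f' ∧ e' ≤ f' := by
  unfold applyUpdE at h ⊢
  by_cases hc : ∀ k, u.comp k = UpdComp.dec → e k ≠ 0
  · rw [if_pos hc] at h
    have hcf : ∀ k, u.comp k = UpdComp.dec → f k ≠ 0 := by
      intro k hk h0
      exact hc k hk (le_antisymm (h0 ▸ hef k) zero_le)
    rw [if_pos hcf]
    refine ⟨_, rfl, ?_⟩
    rw [← (Option.some.injEq _ _).mp h]
    intro k
    cases hcomp : u.comp k with
    | dec => simp only [hcomp]; exact tsub_le_tsub_right (hef k) 1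
    | zero => simp only [hcomp]; exact hef k
    | minOf D =>
        simp only [hcomp]
        exact Finset.le_inf' _ _ (fun b hb => le_trans (Finset.inf'_le _ hb) (hef b))
  · rw [if_neg hc] at h
    cases h

lemma AttackerWins.mono {N : ℕ} {G : EnergyGame N} {g : G.Pos} {e f : EnergyE N}
    (h : AttackerWins G g e) (hef : e ≤ f) : AttackerWins G g f := by
  induction h generalizing f with
  | attack hnd hmv hupd _ ih =>
      obtain ⟨f', hf', hef'⟩ := applyUpdE_mono hef hupd
      exact AttackerWins.attack hnd hmv hf' (ih hef')
  | defend hd hsome _ ih =>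
      refine AttackerWins.defend hd ?_ ?_
      · intro g' hmv
        obtain ⟨e', he'⟩ := Option.isSome_iff_exists.mp (hsome g' hmv)
        obtain ⟨f', hf', _⟩ := applyUpdE_mono hef he'
        exact Option.isSome_iff_exists.mpr ⟨f', hf'⟩
      · intro g' f' hmv hf'
        obtain ⟨e', he'⟩ := Option.isSome_iff_exists.mp (hsome g' hmv)
        obtain ⟨f'', hf'', hef''⟩ := applyUpdE_mono hef he'
        rw [hf'] at hf''
        cases (Option.some.injEq _ _).mp hf''
        exact ih g' e' hmv he' hef''

end Updates
section Expr

variable {Act : Type}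

/-- The price of a clause: negation adds one to component 5. -/
def exprCl : HMLClause Act → Energy 6
  | .pos φ => φ.expr
  | .neg φ => fun k => φ.expr k + (if k = 5 then 1 else 0)

lemma exprList_eq_map (l : List (HML Act)) : exprList l = l.map HML.expr := by
  induction l with
  | nil => rfl
  | cons a t ih => rw [exprList, ih, List.map_cons]

/-- The list of clause prices of a conjunction. -/
def clE (poss negs : List (HML Act)) : List (Energy 6) :=
  poss.map HML.expr ++ negs.map (fun φ => exprCl (.neg φ))

lemma expr_conj (poss negs : List (HML Act)) :
    (HML.conj poss negs).expr = fun k =>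
      max (if k = 1 then 1 + listMax ((clE poss negs).map (fun v => v 1))
        else if k = 2 then listMax ((poss.map HML.expr).map (fun v => v 0))
        else if k = 3 then supErase ((poss.map HML.expr).map (fun v => v 0))
        else if k = 4 then listMax ((negs.map HML.expr).map (fun v => v 0))
        else 0)
        (listMax ((clE poss negs).map (fun v => v k))) := by
  show (fun k => _) = _
  simp only [HML.expr, exprList_eq_map, clE, exprCl, List.map_map]
  rfl

lemma mem_clE {poss negs : List (HML Act)} {v : Energy 6} :
    v ∈ clE poss negs ↔
      (∃ φ ∈ poss, v = φ.expr) ∨ (∃ φ ∈ negs, v = exprCl (.neg φ)) := by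
  simp only [clE, List.mem_append, List.mem_map]
  constructor
  · rintro (⟨φ, h1, rfl⟩ | ⟨φ, h1, rfl⟩)
    · exact Or.inl ⟨φ, h1, rfl⟩
    · exact Or.inr ⟨φ, h1, rfl⟩
  · rintro (⟨φ, h1, rfl⟩ | ⟨φ, h1, rfl⟩)
    · exact Or.inl ⟨φ, h1, rfl⟩
    · exact Or.inr ⟨φ, h1, rfl⟩

/-- positive clause formulas of a clause list. -/
def posL (cl : List (HMLClause Act)) : List (HML Act) :=
  cl.filterMap fun c => match c with | .pos φ => some φ | .neg _ => none

def negL (cl : List (HMLClause Act)) : List (HML Act) :=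
  cl.filterMap fun c => match c with | .neg φ => some φ | .pos _ => none

lemma clausesConj_eq (cl : List (HMLClause Act)) :
    clausesConj cl = HML.conj (posL cl) (negL cl) := rfl

lemma mem_posL {cl : List (HMLClause Act)} {φ : HML Act} :
    φ ∈ posL cl ↔ HMLClause.pos φ ∈ cl := by
  simp only [posL, List.mem_filterMap]
  constructor
  · rintro ⟨c, hc, h⟩
    cases c with
    | pos ψ => cases h; exact hc
    | neg ψ => cases h
  · intro h; exact ⟨_, h, rfl⟩

lemma mem_negL {cl : List (HMLClause Act)} {φ : HML Act} :
    φ ∈ negL cl ↔ HMLClause.neg φ ∈ cl := by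
  simp only [negL, List.mem_filterMap]
  constructor
  · rintro ⟨c, hc, h⟩
    cases c with
    | neg ψ => cases h; exact hc
    | pos ψ => cases h
  · intro h; exact ⟨_, h, rfl⟩

lemma mem_clE_of_mem_cl {cl : List (HMLClause Act)} {c : HMLClause Act} (h : c ∈ cl) :
    exprCl c ∈ clE (posL cl) (negL cl) := by
  rw [mem_clE]
  cases c with
  | pos φ => exact Or.inl ⟨φ, mem_posL.mpr h, rfl⟩
  | neg φ => exact Or.inr ⟨φ, mem_negL.mpr h, rfl⟩

lemma mem_cl_of_mem_clE {cl : List (HMLClause Act)} {v : Energy 6}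
    (h : v ∈ clE (posL cl) (negL cl)) : ∃ c ∈ cl, v = exprCl c := by
  rw [mem_clE] at h
  rcases h with ⟨φ, h1, rfl⟩ | ⟨φ, h1, rfl⟩
  · exact ⟨.pos φ, mem_posL.mp h1, rfl⟩
  · exact ⟨.neg φ, mem_negL.mp h1, rfl⟩

/-- Component 3 of a price is bounded by component 2. -/
lemma expr32 (φ : HML Act) : φ.expr 3 ≤ φ.expr 2 := by
  refine HML.rec (motive_1 := fun φ => φ.expr 3 ≤ φ.expr 2)
    (motive_2 := fun l => ∀ ψ ∈ l, ψ.expr 3 ≤ ψ.expr 2) ?_ ?_ ?_ ?_ φ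
  · intro a φ ih
    show φ.expr 3 + _ ≤ φ.expr 2 + _
    simpa using ih
  · intro poss negs ihp ihn
    rw [expr_conj]
    simp only
    refine max_le (le_max_of_le_left ?_) (le_max_of_le_right ?_)
    · exact supErase_le_listMax _
    · refine listMax_le fun x hx => ?_
      obtain ⟨v, hv, rfl⟩ := List.mem_map.mp hx
      have h32 : v 3 ≤ v 2 := by
        rcases mem_clE.mp hv with ⟨φ, h1, rfl⟩ | ⟨φ, h1, rfl⟩
        · exact ihp φ h1
        · show φ.expr 3 + _ ≤ φ.expr 2 + _
          simpa using ihn φ h1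
      exact le_trans h32 (le_listMax (List.mem_map.mpr ⟨v, hv, rfl⟩))
  · intro ψ h
    exact absurd h (List.not_mem_nil)
  · intro hd tl ih1 ih2 ψ h
    rcases List.mem_cons.mp h with rfl | h
    · exact ih1
    · exact ih2 ψ h

end Expr
section Game

variable {P Act : Type} {step : P → Act → P → Prop}

lemma not_def_att {p : P} {Q : Set P} : ¬ (specGame step).defender (SpecPos.att p Q) := by
  rintro ⟨p', Q', Qs', h⟩
  cases h

lemma not_def_attConj {p q : P} : ¬ (specGame step).defender (SpecPos.attConj p q) := by
  rintro ⟨p', Q', Qs', h⟩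
  cases h

lemma def_defp {p : P} {Q Qs : Set P} : (specGame step).defender (SpecPos.defp p Q Qs) :=
  ⟨p, Q, Qs, rfl⟩

lemma stepSet_mono {Q' Q : Set P} {a : Act} (h : Q' ⊆ Q) :
    stepSet step Q' a ⊆ stepSet step Q a := by
  rintro x ⟨q, hq, hs⟩
  exact ⟨q, h hq, hs⟩

/-- Simulation relation: smaller sets of spectator processes are easier for the attacker. -/
inductive SRel {P : Type} : SpecPos P → SpecPos P → Prop where
  | att {p : P} {Q' Q : Set P} : Q' ⊆ Q → SRel (.att p Q') (.att p Q)
  | conj {p q : P} : SRel (.attConj p q) (.attConj p q)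
  | defp {p : P} {Q' Q Qs' Qs : Set P} : Q' ⊆ Q → Qs' ⊆ Qs →
      SRel (.defp p Q' Qs') (.defp p Q Qs)

/-- Monotonicity of attacker winning w.r.t. the simulation relation. -/
lemma AttackerWins.srel {g : (specGame step).Pos} {e : EnergyE 6}
    (h : AttackerWins (specGame step) g e) :
    ∀ g', SRel g' g → AttackerWins (specGame step) g' e := by
  induction h with
  | attack hnd hmv hupd hw ih =>
      intro g' hrel
      cases hrel with
      | att hQ =>
          cases hmv with
          | obs hstep =>
              exact AttackerWins.attack not_def_att
                (show (specGame step).move _ _ from SpecMove.obs hstep) hupd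
                (ih _ (SRel.att (stepSet_mono hQ)))
          | conjChallenge hQs =>
              refine AttackerWins.attack not_def_att
                (show (specGame step).move _ _ from
                  SpecMove.conjChallenge (Set.inter_subset_right)) hupd
                (ih _ (SRel.defp ?_ Set.inter_subset_left))
              intro x hx
              exact ⟨hQ hx.1, fun hxq => hx.2 ⟨hxq, hx.1⟩⟩
      | conj =>
          cases hmv with
          | posDecision =>
              exact AttackerWins.attack not_def_attConj
                (show (specGame step).move _ _ from SpecMove.posDecision) hupd
                (ih _ (SRel.att (Set.Subset.refl _)))
          | negDecision hne =>
              exact AttackerWins.attack not_def_attConj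
                (show (specGame step).move _ _ from SpecMove.negDecision hne) hupd
                (ih _ (SRel.att (Set.Subset.refl _)))
      | defp hQ hQs =>
          exact absurd def_defp hnd
  | @defend g e hd hsome hw ih =>
      intro g' hrel
      cases hrel with
      | att hQ => obtain ⟨p', Q', Qs', h⟩ := hd; cases h
      | conj => obtain ⟨p', Q', Qs', h⟩ := hd; cases h
      | defp hQ hQs =>
          refine AttackerWins.defend def_defp ?_ ?_
          · intro g2 hmv2
            cases hmv2 with
            | conjRevival hne =>
                show (applyUpdE e uRevival).isSome = true
                rw [applyUpdE_uRevival]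
                rfl
            | conjAnswer hq =>
                show (applyUpdE e uAnswer).isSome = true
                rw [applyUpdE_uAnswer]
                rfl
          · intro g2 e2 hmv2 hupd2
            cases hmv2 with
            | conjRevival hne =>
                refine ih _ e2 (show (specGame step).move _ _ from SpecMove.conjRevival ?_)
                  hupd2 _ (SRel.att hQs)
                intro hQse
                exact hne (Set.subset_eq_empty hQs hQse)
            | conjAnswer hq =>
                exact ih _ e2 (show (specGame step).move _ _ from SpecMove.conjAnswer (hQ hq))
                  hupd2 _ SRel.conj

end Game
section ConjPrices

variable {Act : Type}

/-- The decremented price used at defender positions. -/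
def dexpr (φ : HML Act) : Energy 6 := fun k => if k = 1 then φ.expr 1 - 1 else φ.expr k

/-- clause prices at a component. -/
def ceL (cl : List (HMLClause Act)) (k : Fin 6) : List ℕ :=
  (clE (posL cl) (negL cl)).map (fun v => v k)

def peL (cl : List (HMLClause Act)) : List ℕ :=
  ((posL cl).map HML.expr).map (fun v => v 0)

def neL (cl : List (HMLClause Act)) : List ℕ :=
  ((negL cl).map HML.expr).map (fun v => v 0)

lemma expr_conj_0 (cl : List (HMLClause Act)) :
    (clausesConj cl).expr 0 = listMax (ceL cl 0) := by
  rw [clausesConj_eq, expr_conj]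
  exact Nat.zero_max _

lemma expr_conj_1 (cl : List (HMLClause Act)) :
    (clausesConj cl).expr 1 = 1 + listMax (ceL cl 1) := by
  rw [clausesConj_eq, expr_conj]
  show max (1 + listMax (ceL cl 1)) (listMax (ceL cl 1)) = _
  exact max_eq_left (Nat.le_add_left _ _)

lemma expr_conj_2 (cl : List (HMLClause Act)) :
    (clausesConj cl).expr 2 = max (listMax (peL cl)) (listMax (ceL cl 2)) := by
  rw [clausesConj_eq, expr_conj]
  rfl

lemma expr_conj_3 (cl : List (HMLClause Act)) :
    (clausesConj cl).expr 3 = max (supErase (peL cl)) (listMax (ceL cl 3)) := by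
  rw [clausesConj_eq, expr_conj]
  rfl

lemma expr_conj_4 (cl : List (HMLClause Act)) :
    (clausesConj cl).expr 4 = max (listMax (neL cl)) (listMax (ceL cl 4)) := by
  rw [clausesConj_eq, expr_conj]
  rfl

lemma expr_conj_5 (cl : List (HMLClause Act)) :
    (clausesConj cl).expr 5 = listMax (ceL cl 5) := by
  rw [clausesConj_eq, expr_conj]
  exact Nat.zero_max _

lemma one_le_expr_conj_1 (cl : List (HMLClause Act)) : 1 ≤ (clausesConj cl).expr 1 := by
  rw [expr_conj_1]; exact Nat.le_add_right _ _

lemma dexpr_conj_1 (cl : List (HMLClause Act)) :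
    dexpr (clausesConj cl) 1 = listMax (ceL cl 1) := by
  show (clausesConj cl).expr 1 - 1 = _
  rw [expr_conj_1]
  omega

lemma dexpr_eq_expr {k : Fin 6} (h : k ≠ 1) (φ : HML Act) : dexpr φ k = φ.expr k := if_neg h

lemma mem_ceL {cl : List (HMLClause Act)} {k : Fin 6} {x : ℕ} :
    x ∈ ceL cl k ↔ ∃ c ∈ cl, x = exprCl c k := by
  constructor
  · intro hx
    obtain ⟨v, hv, rfl⟩ := List.mem_map.mp hx
    obtain ⟨c, hc, rfl⟩ := mem_cl_of_mem_clE hv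
    exact ⟨c, hc, rfl⟩
  · rintro ⟨c, hc, rfl⟩
    exact List.mem_map.mpr ⟨_, mem_clE_of_mem_cl hc, rfl⟩

lemma mem_peL {cl : List (HMLClause Act)} {x : ℕ} :
    x ∈ peL cl ↔ ∃ φ, HMLClause.pos φ ∈ cl ∧ x = φ.expr 0 := by
  constructor
  · intro hx
    obtain ⟨v, hv, rfl⟩ := List.mem_map.mp hx
    obtain ⟨φ, hφ, rfl⟩ := List.mem_map.mp hv
    exact ⟨φ, mem_posL.mp hφ, rfl⟩
  · rintro ⟨φ, hφ, rfl⟩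
    exact List.mem_map.mpr ⟨_, List.mem_map.mpr ⟨φ, mem_posL.mpr hφ, rfl⟩, rfl⟩

lemma mem_neL {cl : List (HMLClause Act)} {x : ℕ} :
    x ∈ neL cl ↔ ∃ φ, HMLClause.neg φ ∈ cl ∧ x = φ.expr 0 := by
  constructor
  · intro hx
    obtain ⟨v, hv, rfl⟩ := List.mem_map.mp hx
    obtain ⟨φ, hφ, rfl⟩ := List.mem_map.mp hv
    exact ⟨φ, mem_negL.mp hφ, rfl⟩
  · rintro ⟨φ, hφ, rfl⟩
    exact List.mem_map.mpr ⟨_, List.mem_map.mpr ⟨φ, mem_negL.mpr hφ, rfl⟩, rfl⟩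

lemma exprCl_le_dexpr {cl : List (HMLClause Act)} {c : HMLClause Act} (hc : c ∈ cl) (k : Fin 6) :
    exprCl c k ≤ dexpr (clausesConj cl) k := by
  have hmem : exprCl c k ∈ ceL cl k := mem_ceL.mpr ⟨c, hc, rfl⟩
  by_cases h1 : k = 1
  · subst h1
    rw [dexpr_conj_1]
    exact le_listMax hmem
  · rw [dexpr_eq_expr h1, clausesConj_eq, expr_conj]
    exact le_trans (le_listMax hmem) (le_max_right _ _)

lemma exprCl32 (c : HMLClause Act) : exprCl c 3 ≤ exprCl c 2 := by
  cases c with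
  | pos φ => exact expr32 φ
  | neg φ =>
      show φ.expr 3 + _ ≤ φ.expr 2 + _
      simpa using expr32 φ

lemma exprCl3_le_min {cl : List (HMLClause Act)} {c : HMLClause Act} (hc : c ∈ cl) :
    exprCl c 3 ≤ min (dexpr (clausesConj cl) 2) (dexpr (clausesConj cl) 3) :=
  le_min (le_trans (exprCl32 c) (exprCl_le_dexpr hc 2)) (exprCl_le_dexpr hc 3)

lemma pos0_le_D2 {cl : List (HMLClause Act)} {φ : HML Act} (h : HMLClause.pos φ ∈ cl) :
    φ.expr 0 ≤ dexpr (clausesConj cl) 2 := by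
  rw [dexpr_eq_expr (by decide), expr_conj_2]
  exact le_trans (le_listMax (mem_peL.mpr ⟨φ, h, rfl⟩)) (le_max_left _ _)

lemma neg0_le_D4 {cl : List (HMLClause Act)} {φ : HML Act} (h : HMLClause.neg φ ∈ cl) :
    φ.expr 0 ≤ dexpr (clausesConj cl) 4 := by
  rw [dexpr_eq_expr (by decide), expr_conj_4]
  exact le_trans (le_listMax (mem_neL.mpr ⟨φ, h, rfl⟩)) (le_max_left _ _)

lemma supErase_le_D3 (cl : List (HMLClause Act)) :
    supErase (peL cl) ≤ dexpr (clausesConj cl) 3 := by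
  rw [dexpr_eq_expr (by decide), expr_conj_3]
  exact le_max_left _ _

end ConjPrices
section ConjPrices2

variable {Act : Type}

lemma posL_append (l1 l2 : List (HMLClause Act)) : posL (l1 ++ l2) = posL l1 ++ posL l2 :=
  List.filterMap_append

lemma posL_cons_pos (φ : HML Act) (l : List (HMLClause Act)) :
    posL (HMLClause.pos φ :: l) = φ :: posL l := rfl

lemma posL_cons_neg (φ : HML Act) (l : List (HMLClause Act)) :
    posL (HMLClause.neg φ :: l) = posL l := rfl

lemma peL_append (l1 l2 : List (HMLClause Act)) : peL (l1 ++ l2) = peL l1 ++ peL l2 := by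
  simp [peL, posL_append]

lemma peL_cons_pos (φ : HML Act) (l : List (HMLClause Act)) :
    peL (HMLClause.pos φ :: l) = φ.expr 0 :: peL l := by
  simp [peL, posL_cons_pos]

lemma neL_cons_pos (φ : HML Act) (l : List (HMLClause Act)) :
    neL (HMLClause.pos φ :: l) = neL l := rfl

/-- budget of a positive decision after a conjunction answer dominates the
formula price, provided the head depth is bounded by `supErase`. -/
lemma posdec_after_answer_le {cl : List (HMLClause Act)} {φ : HML Act}
    (hc : HMLClause.pos φ ∈ cl) (hsup : φ.expr 0 ≤ supErase (peL cl)) :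
    φ.exprE ≤ fun k => if k = 0
      then min
        ((fun k => if k = 3
          then min ((dexpr (clausesConj cl)).toE 2) ((dexpr (clausesConj cl)).toE 3)
          else (dexpr (clausesConj cl)).toE k) 0)
        ((fun k => if k = 3
          then min ((dexpr (clausesConj cl)).toE 2) ((dexpr (clausesConj cl)).toE 3)
          else (dexpr (clausesConj cl)).toE k) 3)
      else (fun k => if k = 3
          then min ((dexpr (clausesConj cl)).toE 2) ((dexpr (clausesConj cl)).toE 3)
          else (dexpr (clausesConj cl)).toE k) k := by
  have hD2 : (φ.expr 0 : ℕ∞) ≤ (dexpr (clausesConj cl)).toE 2 := Nat.cast_le.mpr (pos0_le_D2 hc)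
  have hD3 : (φ.expr 0 : ℕ∞) ≤ (dexpr (clausesConj cl)).toE 3 :=
    Nat.cast_le.mpr (le_trans hsup (supErase_le_D3 cl))
  intro k
  by_cases h0 : k = 0
  · subst h0
    show (φ.expr 0 : ℕ∞) ≤ min ((dexpr (clausesConj cl)).toE 0)
      (min ((dexpr (clausesConj cl)).toE 2) ((dexpr (clausesConj cl)).toE 3))
    exact le_min (Nat.cast_le.mpr (exprCl_le_dexpr hc 0)) (le_min hD2 hD3)
  · simp only [if_neg h0]
    by_cases h3 : k = 3
    · subst h3
      show (φ.expr 3 : ℕ∞) ≤ min ((dexpr (clausesConj cl)).toE 2) ((dexpr (clausesConj cl)).toE 3)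
      exact le_min (Nat.cast_le.mpr (le_trans (expr32 φ) (exprCl_le_dexpr hc 2)))
        (Nat.cast_le.mpr (exprCl_le_dexpr hc 3))
    · simp only [if_neg h3]
      exact Nat.cast_le.mpr (exprCl_le_dexpr hc k)

end ConjPrices2
section Main

variable {P Act : Type} {step : P → Act → P → Prop}

lemma castSupErase_cons_le {rest : List ℕ} {x : ℕ∞} (a : ℕ)
    (h : ∀ y ∈ rest, (y : ℕ∞) ≤ x) : ((supErase (a :: rest) : ℕ) : ℕ∞) ≤ x := by
  rcases le_total (listMax rest) a with h1 | h1
  · unfold supErase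
    rw [listMax_cons, max_eq_left h1, List.erase_cons_head]
    exact castListMax_le h
  · refine castListMax_le fun z hz => ?_
    rcases List.mem_cons.mp (List.mem_of_mem_erase hz) with rfl | hz'
    · exact le_trans (Nat.cast_le.mpr h1) (castListMax_le h)
    · exact h z hz'

lemma le_supErase_cons {rest : List ℕ} {a x : ℕ} (h : listMax rest ≤ a) (hx : x ∈ rest) :
    x ≤ supErase (a :: rest) := by
  unfold supErase
  rw [listMax_cons, max_eq_left h, List.erase_cons_head]
  exact le_listMax hx

/-- Winning a defender position from answer- and revival-budgets. -/
lemma defend_defp {p : P} {A B : Set P} {d : EnergyE 6}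
    (HA : ∀ q ∈ A, AttackerWins (specGame step) (SpecPos.attConj p q)
      (fun k => if k = 3 then min (d 2) (d 3) else d k))
    (HR : B ≠ ∅ → AttackerWins (specGame step) (SpecPos.att p B)
      (fun k => if k = 0 then min (d 0) (d 2) else d k)) :
    AttackerWins (specGame step) (SpecPos.defp p A B) d := by
  refine AttackerWins.defend def_defp ?_ ?_
  · intro g2 hmv
    cases hmv with
    | conjRevival hne =>
        show (applyUpdE d uRevival).isSome = true
        rw [applyUpdE_uRevival]; rfl
    | conjAnswer hq =>
        show (applyUpdE d uAnswer).isSome = true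
        rw [applyUpdE_uAnswer]; rfl
  · intro g2 e2 hmv hupd
    cases hmv with
    | conjRevival hne =>
        have h2 : applyUpdE d uRevival = some e2 := hupd
        rw [applyUpdE_uRevival] at h2
        cases (Option.some.injEq _ _).mp h2
        exact HR hne
    | conjAnswer hq =>
        have h2 : applyUpdE d uAnswer = some e2 := hupd
        rw [applyUpdE_uAnswer] at h2
        cases (Option.some.injEq _ _).mp h2
        exact HA _ hq

/-- Motive for `Strat`. -/
def M1 (step : P → Act → P → Prop) (g : SpecPos P) (e : EnergyE 6) (φ : HML Act) : Prop :=
  (∀ p Q, g = SpecPos.att p Q →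
      φ.exprE ≤ e ∧ AttackerWins (specGame step) (SpecPos.att p Q) φ.exprE) ∧
  (∀ p Q Qs, g = SpecPos.defp p Q Qs →
      (dexpr φ).toE ≤ e ∧ 1 ≤ φ.expr 1 ∧
      ∃ Qs', Qs' ⊆ Q ∪ Qs ∧
        AttackerWins (specGame step) (SpecPos.defp p ((Q ∪ Qs) \ Qs') Qs') (dexpr φ).toE)

/-- decision index of a clause. -/
def cIdx : HMLClause Act → Fin 6
  | .pos _ => 3
  | .neg _ => 4

/-- head modal depth of a clause. -/
def cHead : HMLClause Act → ℕ
  | .pos φ => φ.expr 0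
  | .neg φ => φ.expr 0

/-- Motive for `StratClause`. -/
def M2 (step : P → Act → P → Prop) (g : SpecPos P) (e : EnergyE 6) (c : HMLClause Act) : Prop :=
  ∀ p q, g = SpecPos.attConj p q →
    ((exprCl c).toE ≤ e) ∧ ((cHead c : ℕ∞) ≤ e (cIdx c)) ∧
    (∀ f : EnergyE 6, (exprCl c).toE ≤ f → (cHead c : ℕ∞) ≤ f (cIdx c) →
      AttackerWins (specGame step) (SpecPos.attConj p q) f) ∧
    (∀ φ, c = .pos φ → φ.isObs ∧ AttackerWins (specGame step) (SpecPos.att p {q}) φ.exprE)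

/-- The decremented conjunction price is bounded by the defender-position budget. -/
lemma dexpr_le {cl : List (HMLClause Act)} {e : EnergyE 6}
    (hce : ∀ c ∈ cl, ∀ k : Fin 6,
      (exprCl c k : ℕ∞) ≤ (if k = 3 then min (e 2) (e 3) else e k))
    (hpe2 : ∀ y ∈ peL cl, (y : ℕ∞) ≤ e 2)
    (hne : ∀ y ∈ neL cl, (y : ℕ∞) ≤ e 4)
    (hsup : ((supErase (peL cl) : ℕ) : ℕ∞) ≤ e 3) :
    (dexpr (clausesConj cl)).toE ≤ e := by
  have hcek : ∀ (k : Fin 6), k ≠ 3 → ∀ c ∈ cl, (exprCl c k : ℕ∞) ≤ e k := by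
    intro k hk c hc
    have := hce c hc k
    rwa [if_neg hk] at this
  have hce3 : ∀ c ∈ cl, (exprCl c 3 : ℕ∞) ≤ min (e 2) (e 3) := by
    intro c hc
    have := hce c hc 3
    rwa [if_pos rfl] at this
  have h0 : ((dexpr (clausesConj cl) 0 : ℕ) : ℕ∞) ≤ e 0 := by
    rw [dexpr_eq_expr (by decide), expr_conj_0]
    refine castListMax_le fun a ha => ?_
    obtain ⟨c, hc, rfl⟩ := mem_ceL.mp ha
    exact hcek 0 (by decide) c hc
  have h1 : ((dexpr (clausesConj cl) 1 : ℕ) : ℕ∞) ≤ e 1 := by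
    rw [dexpr_conj_1]
    refine castListMax_le fun a ha => ?_
    obtain ⟨c, hc, rfl⟩ := mem_ceL.mp ha
    exact hcek 1 (by decide) c hc
  have h2 : ((dexpr (clausesConj cl) 2 : ℕ) : ℕ∞) ≤ e 2 := by
    rw [dexpr_eq_expr (by decide), expr_conj_2]
    refine castMax_le (castListMax_le hpe2) (castListMax_le fun a ha => ?_)
    obtain ⟨c, hc, rfl⟩ := mem_ceL.mp ha
    exact hcek 2 (by decide) c hc
  have h3 : ((dexpr (clausesConj cl) 3 : ℕ) : ℕ∞) ≤ e 3 := by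
    rw [dexpr_eq_expr (by decide), expr_conj_3]
    refine castMax_le hsup (castListMax_le fun a ha => ?_)
    obtain ⟨c, hc, rfl⟩ := mem_ceL.mp ha
    exact le_trans (hce3 c hc) (min_le_right _ _)
  have h4 : ((dexpr (clausesConj cl) 4 : ℕ) : ℕ∞) ≤ e 4 := by
    rw [dexpr_eq_expr (by decide), expr_conj_4]
    refine castMax_le (castListMax_le hne) (castListMax_le fun a ha => ?_)
    obtain ⟨c, hc, rfl⟩ := mem_ceL.mp ha
    exact hcek 4 (by decide) c hc
  have h5 : ((dexpr (clausesConj cl) 5 : ℕ) : ℕ∞) ≤ e 5 := by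
    rw [dexpr_eq_expr (by decide), expr_conj_5]
    refine castListMax_le fun a ha => ?_
    obtain ⟨c, hc, rfl⟩ := mem_ceL.mp ha
    exact hcek 5 (by decide) c hc
  intro k
  fin_cases k
  · exact h0
  · exact h1
  · exact h2
  · exact h3
  · exact h4
  · exact h5

/-- Winning an answered clause from the answer budget of the decremented conjunction price. -/
lemma clause_answer_win {cl : List (HMLClause Act)} {c : HMLClause Act} (hc : c ∈ cl)
    {p q : P}
    (H3 : ∀ f : EnergyE 6, (exprCl c).toE ≤ f → (cHead c : ℕ∞) ≤ f (cIdx c) →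
      AttackerWins (specGame step) (SpecPos.attConj p q) f)
    (hpos : ∀ φ, c = HMLClause.pos φ → φ.expr 0 ≤ supErase (peL cl)) :
    AttackerWins (specGame step) (SpecPos.attConj p q)
      (fun k => if k = 3
        then min ((dexpr (clausesConj cl)).toE 2) ((dexpr (clausesConj cl)).toE 3)
        else (dexpr (clausesConj cl)).toE k) := by
  refine H3 _ ?_ ?_
  · intro k
    by_cases h3 : k = 3
    · subst h3
      simp only [if_pos rfl]
      exact le_min (Nat.cast_le.mpr (le_trans (exprCl32 c) (exprCl_le_dexpr hc 2)))
        (Nat.cast_le.mpr (exprCl_le_dexpr hc 3))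
    · simp only [if_neg h3]
      exact Nat.cast_le.mpr (exprCl_le_dexpr hc k)
  · cases c with
    | pos φ =>
        show (φ.expr 0 : ℕ∞) ≤ if (3 : Fin 6) = 3 then _ else _
        rw [if_pos rfl]
        exact le_min (Nat.cast_le.mpr (pos0_le_D2 hc))
          (Nat.cast_le.mpr (le_trans (hpos φ rfl) (supErase_le_D3 cl)))
    | neg φ =>
        show (φ.expr 0 : ℕ∞) ≤ if (4 : Fin 6) = 3 then _ else _
        rw [if_neg (by decide)]
        exact Nat.cast_le.mpr (neg0_le_D4 hc)

/-- The revival budget of the decremented conjunction price dominates a positive clause. -/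
lemma revival_budget_le {cl : List (HMLClause Act)} {φ : HML Act}
    (hc : HMLClause.pos φ ∈ cl) :
    φ.exprE ≤ fun k => if k = 0
      then min ((dexpr (clausesConj cl)).toE 0) ((dexpr (clausesConj cl)).toE 2)
      else (dexpr (clausesConj cl)).toE k := by
  intro k
  by_cases h0 : k = 0
  · subst h0
    simp only [if_pos rfl]
    exact le_min (Nat.cast_le.mpr (exprCl_le_dexpr hc 0)) (Nat.cast_le.mpr (pos0_le_D2 hc))
  · simp only [if_neg h0]
    exact Nat.cast_le.mpr (exprCl_le_dexpr hc k)

end Main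
section MainProof

variable {P Act : Type} {step : P → Act → P → Prop}

lemma cast_succ_le {x : ℕ} {c : ℕ∞} (h1 : (1:ℕ∞) ≤ c) (h : (x:ℕ∞) ≤ c - 1) :
    (x:ℕ∞) + 1 ≤ c := by
  induction c using ENat.recTopCoe with
  | top => exact le_top
  | coe n =>
      have h1' : 1 ≤ n := by exact_mod_cast h1
      have h' : x ≤ n - 1 := by exact_mod_cast h
      exact_mod_cast by omega

lemma cast_le_pred {x : ℕ} {c : ℕ∞} (h : ((x+1:ℕ):ℕ∞) ≤ c) : (x:ℕ∞) ≤ c - 1 := by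
  induction c using ENat.recTopCoe with
  | top => exact le_top.trans (by simp)
  | coe n =>
      have h' : x + 1 ≤ n := by exact_mod_cast h
      exact_mod_cast by omega

theorem strat_M1 {g : SpecPos P} {e : EnergyE 6} {φ : HML Act}
    (h : Strat step (AttackerWins (specGame step)) g e φ) : M1 step g e φ := by
  refine Strat.rec (motive_1 := fun g e φ _ => M1 step g e φ)
    (motive_2 := fun g e c _ => M2 step g e c) ?_ ?_ ?_ ?_ ?_ ?_ h
  -- obs case
  · intro p p' Q a e e' φ hstep hupd hwin hS ih
    constructor
    · rintro p0 Q0 heq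
      cases heq
      obtain ⟨h0, he'⟩ := applyUpdE_uObs_inv hupd
      subst he'
      obtain ⟨hle, hwin'⟩ := ih.1 p' _ rfl
      have h1 : (1 : ℕ∞) ≤ e 0 := ENat.one_le_iff_ne_zero.mpr h0
      constructor
      · intro k
        by_cases h0k : k = 0
        · subst h0k
          have hk : ((φ.expr 0 : ℕ) : ℕ∞) ≤ e 0 - 1 := hle 0
          show ((φ.expr 0 + 1 : ℕ) : ℕ∞) ≤ e 0
          push_cast
          exact cast_succ_le h1 hk
        · have hk : ((φ.expr k : ℕ) : ℕ∞) ≤ if k = 0 then e 0 - 1 else e k := hle k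
          rw [if_neg h0k] at hk
          show ((φ.expr k + if k = 0 then 1 else 0 : ℕ) : ℕ∞) ≤ e k
          simp only [if_neg h0k]
          simpa using hk
      · have hnz : (HML.obs a φ).exprE 0 ≠ 0 := by
          show ((φ.expr 0 + 1 : ℕ) : ℕ∞) ≠ 0
          simp
        refine AttackerWins.attack not_def_att
          (show (specGame step).move _ _ from SpecMove.obs hstep) ?_ hwin'
        show applyUpdE (HML.obs a φ).exprE uObs = some φ.exprE
        rw [applyUpdE_uObs hnz]
        congr 1
        funext k
        by_cases h0k : k = 0
        · subst h0k
          show ((φ.expr 0 + 1 : ℕ) : ℕ∞) - 1 = (φ.expr 0 : ℕ∞)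
          rw [show ((1:ℕ∞) = ((1:ℕ):ℕ∞)) from rfl, ← ENat.coe_sub]
          exact_mod_cast rfl
        · simp only [if_neg h0k]
          show ((φ.expr k + if k = 0 then 1 else 0 : ℕ) : ℕ∞) = (φ.expr k : ℕ∞)
          simp only [if_neg h0k]
          simp
    · intro p0 Q0 Qs0 heq
      cases heq
  -- conj case
  · intro p Q Qs e e' φ hQs hupd hwin hS ih
    constructor
    · rintro p0 Q0 heq
      cases heq
      obtain ⟨h1ne, he'⟩ := applyUpdE_uConj_inv hupd
      subst he'
      obtain ⟨hdle, h1exp, Qs', hQs'sub, hwinD⟩ := ih.2 p (Q \ Qs) Qs rfl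
      have hU : (Q \ Qs) ∪ Qs = Q := Set.diff_union_of_subset hQs
      have h1e : (1 : ℕ∞) ≤ e 1 := ENat.one_le_iff_ne_zero.mpr h1ne
      constructor
      · intro k
        by_cases h1k : k = 1
        · subst h1k
          have hk : ((φ.expr 1 - 1 : ℕ) : ℕ∞) ≤ e 1 - 1 := hdle 1
          show ((φ.expr 1 : ℕ) : ℕ∞) ≤ e 1
          rw [show φ.expr 1 = (φ.expr 1 - 1) + 1 from by omega]
          push_cast
          exact cast_succ_le h1e hk
        · have hk : ((dexpr φ k : ℕ) : ℕ∞) ≤ if k = 1 then e 1 - 1 else e k := hdle k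
          rw [if_neg h1k, dexpr_eq_expr h1k] at hk
          exact hk
      · have hnz : φ.exprE 1 ≠ 0 := by
          show ((φ.expr 1 : ℕ) : ℕ∞) ≠ 0
          exact_mod_cast Nat.pos_iff_ne_zero.mp h1exp
        refine AttackerWins.attack (e' := (dexpr φ).toE) not_def_att
          (show (specGame step).move _ _ from SpecMove.conjChallenge (hU ▸ hQs'sub)) ?_ ?_
        · show applyUpdE φ.exprE uConj = some (dexpr φ).toE
          rw [applyUpdE_uConj hnz]
          congr 1
          funext k
          by_cases h1k : k = 1
          · subst h1k
            show ((φ.expr 1 : ℕ) : ℕ∞) - 1 = ((φ.expr 1 - 1 : ℕ) : ℕ∞)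
            exact_mod_cast (ENat.coe_sub (φ.expr 1) 1).symm
          · simp only [if_neg h1k]
            show (φ.expr k : ℕ∞) = ((dexpr φ k : ℕ) : ℕ∞)
            rw [dexpr_eq_expr h1k]
        · rw [← hU]
          exact hwinD
    · intro p0 Q0 Qs0 heq
      cases heq
  -- defEmpty case
  · intro p Q e e' hQ ψ hupd hwin hSC ihC
    have he' : e' = fun k => if k = 3 then min (e 2) (e 3) else e k := by
      rw [applyUpdE_uAnswer] at hupd
      exact ((Option.some.injEq _ _).mp hupd).symm
    subst he'
    constructor
    · intro p0 Q0 heq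
      cases heq
    · intro p0 Q0 Qs0 heq
      cases heq
      set cl := List.map ψ hQ.toFinset.toList with hcl
      have hmemQ : ∀ c ∈ cl, ∃ q, q ∈ Q ∧ ψ q = c := by
        intro c hc
        obtain ⟨q, hqL, rfl⟩ := List.mem_map.mp hc
        exact ⟨q, by simpa [Set.Finite.mem_toFinset] using Finset.mem_toList.mp hqL, rfl⟩
      have hmemcl : ∀ q ∈ Q, ψ q ∈ cl := by
        intro q hq
        exact List.mem_map.mpr ⟨q, Finset.mem_toList.mpr (hQ.mem_toFinset.mpr hq), rfl⟩
      have hB1 : ∀ q ∈ Q, ∀ k : Fin 6,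
          ((exprCl (ψ q) k : ℕ) : ℕ∞) ≤ if k = 3 then min (e 2) (e 3) else e k :=
        fun q hq k => (ihC q hq p q rfl).1 k
      have hB3 := fun q (hq : q ∈ Q) => (ihC q hq p q rfl).2.2.1
      have hB4 := fun q (hq : q ∈ Q) => (ihC q hq p q rfl).2.2.2
      have hce : ∀ c ∈ cl, ∀ k : Fin 6,
          ((exprCl c k : ℕ) : ℕ∞) ≤ if k = 3 then min (e 2) (e 3) else e k := by
        intro c hc k
        obtain ⟨q, hq, rfl⟩ := hmemQ c hc
        exact hB1 q hq k
      have hpeMin : ∀ y ∈ peL cl, (y : ℕ∞) ≤ min (e 2) (e 3) := by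
        intro y hy
        obtain ⟨φc, hφc, rfl⟩ := mem_peL.mp hy
        obtain ⟨q, hq, hψq⟩ := hmemQ _ hφc
        have h2 := (ihC q hq p q rfl).2.1
        rw [hψq] at h2
        exact h2
      have hneE : ∀ y ∈ neL cl, (y : ℕ∞) ≤ e 4 := by
        intro y hy
        obtain ⟨φc, hφc, rfl⟩ := mem_neL.mp hy
        obtain ⟨q, hq, hψq⟩ := hmemQ _ hφc
        have h2 := (ihC q hq p q rfl).2.1
        rw [hψq] at h2
        exact h2
      refine ⟨?_, one_le_expr_conj_1 cl, ?_⟩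
      · exact dexpr_le hce (fun y hy => le_trans (hpeMin y hy) (min_le_left _ _)) hneE
          (le_trans (Nat.cast_le.mpr (supErase_le_listMax _))
            (le_trans (castListMax_le hpeMin) (min_le_right _ _)))
      · by_cases hpos : peL cl = []
        · refine ⟨∅, by simp, ?_⟩
          have hset : (Q ∪ ∅) \ (∅ : Set P) = Q := by simp
          rw [hset]
          refine defend_defp ?_ ?_
          · intro q hq
            refine clause_answer_win (hmemcl q hq) (hB3 q hq) ?_
            intro φc hψq
            exfalso
            have hmem : φc.expr 0 ∈ peL cl := mem_peL.mpr ⟨φc, hψq ▸ hmemcl q hq, rfl⟩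
            rw [hpos] at hmem
            exact absurd hmem (List.not_mem_nil)
          · intro hne
            exact absurd rfl hne
        · have hMmem : listMax (peL cl) ∈ peL cl := listMax_mem hpos
          obtain ⟨φm, hφm, hMeq⟩ := mem_peL.mp hMmem
          obtain ⟨qstar, hqstarL, hψqstar⟩ := List.mem_map.mp hφm
          have hqstarQ : qstar ∈ Q := by
            simpa [Set.Finite.mem_toFinset] using Finset.mem_toList.mp hqstarL
          obtain ⟨L₁, L₂, hL⟩ := List.append_of_mem hqstarL
          have hclsplit : cl = List.map ψ L₁ ++ HMLClause.pos φm :: List.map ψ L₂ := by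
            rw [hcl, hL, List.map_append, List.map_cons, hψqstar]
          have hpesplit : peL cl = peL (List.map ψ L₁) ++ φm.expr 0 :: peL (List.map ψ L₂) := by
            rw [hclsplit, peL_append, peL_cons_pos]
          have hallle : ∀ y ∈ peL cl, y ≤ φm.expr 0 := by
            intro y hy
            rw [← hMeq]
            exact le_listMax hy
          have hkey : ∀ x ∈ peL (List.map ψ L₁) ++ peL (List.map ψ L₂),
              x ≤ supErase (peL cl) := by
            intro x hx
            rw [hpesplit]
            refine le_supErase_of_split ?_ hx
            intro y hy
            exact hallle y (hpesplit ▸ hy)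
          have hposother : ∀ q ∈ Q, q ≠ qstar → ∀ φc, ψ q = HMLClause.pos φc →
              φc.expr 0 ≤ supErase (peL cl) := by
            intro q hq hne φc hψq
            refine hkey _ ?_
            have hqL : q ∈ hQ.toFinset.toList := Finset.mem_toList.mpr (hQ.mem_toFinset.mpr hq)
            rw [hL] at hqL
            rcases List.mem_append.mp hqL with h1 | h1
            · exact List.mem_append.mpr (Or.inl
                (mem_peL.mpr ⟨φc, hψq ▸ List.mem_map.mpr ⟨q, h1, rfl⟩, rfl⟩))
            · rcases List.mem_cons.mp h1 with rfl | h1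
              · exact absurd rfl hne
              · exact List.mem_append.mpr (Or.inr
                  (mem_peL.mpr ⟨φc, hψq ▸ List.mem_map.mpr ⟨q, h1, rfl⟩, rfl⟩))
          refine ⟨{qstar}, ?_, ?_⟩
          · rw [Set.union_empty]
            exact Set.singleton_subset_iff.mpr hqstarQ
          · rw [show Q ∪ (∅ : Set P) = Q from Set.union_empty Q]
            refine defend_defp ?_ ?_
            · intro q hq
              refine clause_answer_win (hmemcl q hq.1) (hB3 q hq.1) ?_
              intro φc hψq
              exact hposother q hq.1 (by simpa using hq.2) φc hψq
            · intro _
              have hwinm := (hB4 qstar hqstarQ φm hψqstar).2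
              exact AttackerWins.mono hwinm
                (revival_budget_le (hψqstar ▸ hmemcl qstar hqstarQ))
  -- defRevival case
  · intro p Q Qs e e' estar hQ ψ φstar hQsne hupd hwin hSC hupdR hwinR hSR hobs ihC ihR
    have he' : e' = fun k => if k = 3 then min (e 2) (e 3) else e k := by
      rw [applyUpdE_uAnswer] at hupd
      exact ((Option.some.injEq _ _).mp hupd).symm
    subst he'
    have hestar : estar = fun k => if k = 0 then min (e 0) (e 2) else e k := by
      rw [applyUpdE_uRevival] at hupdR
      exact ((Option.some.injEq _ _).mp hupdR).symm
    subst hestar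
    obtain ⟨hleR, hwinRE⟩ := ihR.1 p Qs rfl
    constructor
    · intro p0 Q0 heq
      cases heq
    · intro p0 Q0 Qs0 heq
      cases heq
      set cl := HMLClause.pos φstar :: List.map ψ hQ.toFinset.toList with hcl
      have hR0 : ((φstar.expr 0 : ℕ) : ℕ∞) ≤ min (e 0) (e 2) := hleR 0
      have hRk : ∀ k : Fin 6, k ≠ 0 → ((φstar.expr k : ℕ) : ℕ∞) ≤ e k := by
        intro k hk
        have h' : ((φstar.expr k : ℕ) : ℕ∞) ≤ if k = 0 then min (e 0) (e 2) else e k := hleR k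
        rwa [if_neg hk] at h'
      have hmemQ : ∀ c ∈ List.map ψ hQ.toFinset.toList, ∃ q, q ∈ Q ∧ ψ q = c := by
        intro c hc
        obtain ⟨q, hqL, rfl⟩ := List.mem_map.mp hc
        exact ⟨q, by simpa [Set.Finite.mem_toFinset] using Finset.mem_toList.mp hqL, rfl⟩
      have hmemcl : ∀ q ∈ Q, ψ q ∈ cl := by
        intro q hq
        exact List.mem_cons_of_mem _
          (List.mem_map.mpr ⟨q, Finset.mem_toList.mpr (hQ.mem_toFinset.mpr hq), rfl⟩)
      have hheadcl : HMLClause.pos φstar ∈ cl := List.mem_cons_self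
      have hB1 : ∀ q ∈ Q, ∀ k : Fin 6,
          ((exprCl (ψ q) k : ℕ) : ℕ∞) ≤ if k = 3 then min (e 2) (e 3) else e k :=
        fun q hq k => (ihC q hq p q rfl).1 k
      have hB3 := fun q (hq : q ∈ Q) => (ihC q hq p q rfl).2.2.1
      have hB4 := fun q (hq : q ∈ Q) => (ihC q hq p q rfl).2.2.2
      have hce : ∀ c ∈ cl, ∀ k : Fin 6,
          ((exprCl c k : ℕ) : ℕ∞) ≤ if k = 3 then min (e 2) (e 3) else e k := by
        intro c hc k
        rcases List.mem_cons.mp hc with rfl | hc'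
        · show ((φstar.expr k : ℕ) : ℕ∞) ≤ _
          by_cases h3 : k = 3
          · subst h3
            rw [if_pos rfl]
            refine le_min ?_ (hRk 3 (by decide))
            exact le_trans (Nat.cast_le.mpr (expr32 φstar)) (hRk 2 (by decide))
          · rw [if_neg h3]
            by_cases h0 : k = 0
            · subst h0
              exact le_trans hR0 (min_le_left _ _)
            · exact hRk k h0
        · obtain ⟨q, hq, rfl⟩ := hmemQ c hc'
          exact hB1 q hq k
      have hpeMinTail : ∀ y ∈ peL (List.map ψ hQ.toFinset.toList),
          (y : ℕ∞) ≤ min (e 2) (e 3) := by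
        intro y hy
        obtain ⟨φc, hφc, rfl⟩ := mem_peL.mp hy
        obtain ⟨q, hq, hψq⟩ := hmemQ _ hφc
        have h2 := (ihC q hq p q rfl).2.1
        rw [hψq] at h2
        exact h2
      have hpesplit0 : peL cl = φstar.expr 0 :: peL (List.map ψ hQ.toFinset.toList) := by
        rw [hcl, peL_cons_pos]
      have hpe2 : ∀ y ∈ peL cl, (y : ℕ∞) ≤ e 2 := by
        intro y hy
        rw [hpesplit0] at hy
        rcases List.mem_cons.mp hy with rfl | hy'
        · exact le_trans hR0 (min_le_right _ _)
        · exact le_trans (hpeMinTail y hy') (min_le_left _ _)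
      have hneE : ∀ y ∈ neL cl, (y : ℕ∞) ≤ e 4 := by
        intro y hy
        rw [hcl, neL_cons_pos] at hy
        obtain ⟨φc, hφc, rfl⟩ := mem_neL.mp hy
        obtain ⟨q, hq, hψq⟩ := hmemQ _ hφc
        have h2 := (ihC q hq p q rfl).2.1
        rw [hψq] at h2
        exact h2
      have hsup : ((supErase (peL cl) : ℕ) : ℕ∞) ≤ e 3 := by
        rw [hpesplit0]
        exact castSupErase_cons_le _
          (fun y hy => le_trans (hpeMinTail y hy) (min_le_right _ _))
      refine ⟨dexpr_le hce hpe2 hneE hsup, one_le_expr_conj_1 cl, ?_⟩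
      rcases le_or_gt (listMax (peL (List.map ψ hQ.toFinset.toList))) (φstar.expr 0) with hA | hB
      · -- the revival clause is deepest: revive it
        refine ⟨Qs, Set.subset_union_right, ?_⟩
        refine defend_defp ?_ ?_
        · intro q hq
          have hqQ : q ∈ Q := by
            rcases hq.1 with h | h
            · exact h
            · exact absurd h hq.2
          refine clause_answer_win (hmemcl q hqQ) (hB3 q hqQ) ?_
          intro φc hψq
          rw [hpesplit0]
          refine le_supErase_cons hA ?_
          exact mem_peL.mpr ⟨φc,
            List.mem_map.mpr ⟨q, Finset.mem_toList.mpr (hQ.mem_toFinset.mpr hqQ), hψq⟩, rfl⟩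
        · intro _
          exact AttackerWins.mono hwinRE (revival_budget_le hheadcl)
      · -- an answered positive clause is deeper: revive that one instead
        have hrne : peL (List.map ψ hQ.toFinset.toList) ≠ [] := by
          intro h
          rw [h] at hB
          exact Nat.not_lt_zero _ hB
        have hMmem := listMax_mem hrne
        obtain ⟨φm, hφm, hMeq⟩ := mem_peL.mp hMmem
        obtain ⟨qstar, hqstarL, hψqstar⟩ := List.mem_map.mp hφm
        have hqstarQ : qstar ∈ Q := by
          simpa [Set.Finite.mem_toFinset] using Finset.mem_toList.mp hqstarL
        obtain ⟨L₁, L₂, hL⟩ := List.append_of_mem hqstarL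
        have htailsplit : List.map ψ hQ.toFinset.toList
            = List.map ψ L₁ ++ HMLClause.pos φm :: List.map ψ L₂ := by
          rw [hL, List.map_append, List.map_cons, hψqstar]
        have hpesplit : peL cl
            = (φstar.expr 0 :: peL (List.map ψ L₁)) ++ φm.expr 0 :: peL (List.map ψ L₂) := by
          rw [hpesplit0, htailsplit, peL_append, peL_cons_pos]
          rfl
        have hallle : ∀ y ∈ peL cl, y ≤ φm.expr 0 := by
          intro y hy
          rw [hpesplit0] at hy
          rcases List.mem_cons.mp hy with rfl | hy'
          · exact le_of_lt (hMeq ▸ hB)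
          · exact hMeq ▸ le_listMax hy'
        have hkey : ∀ x ∈ (φstar.expr 0 :: peL (List.map ψ L₁)) ++ peL (List.map ψ L₂),
            x ≤ supErase (peL cl) := by
          intro x hx
          rw [hpesplit]
          refine le_supErase_of_split ?_ hx
          intro y hy
          exact hallle y (hpesplit ▸ hy)
        have hstarsup : φstar.expr 0 ≤ supErase (peL cl) := hkey _ (by simp)
        have hposother : ∀ q ∈ Q, q ≠ qstar → ∀ φc, ψ q = HMLClause.pos φc →
            φc.expr 0 ≤ supErase (peL cl) := by
          intro q hq hne φc hψq
          refine hkey _ ?_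
          have hqL : q ∈ hQ.toFinset.toList := Finset.mem_toList.mpr (hQ.mem_toFinset.mpr hq)
          rw [hL] at hqL
          rcases List.mem_append.mp hqL with h1 | h1
          · exact List.mem_append.mpr (Or.inl (List.mem_cons_of_mem _
              (mem_peL.mpr ⟨φc, List.mem_map.mpr ⟨q, h1, hψq⟩, rfl⟩)))
          · rcases List.mem_cons.mp h1 with rfl | h1
            · exact absurd rfl hne
            · exact List.mem_append.mpr (Or.inr
                (mem_peL.mpr ⟨φc, List.mem_map.mpr ⟨q, h1, hψq⟩, rfl⟩))
        refine ⟨{qstar}, Set.singleton_subset_iff.mpr (Set.mem_union_left _ hqstarQ), ?_⟩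
        refine defend_defp ?_ ?_
        · intro q hq
          have hqne : q ≠ qstar := by simpa using hq.2
          by_cases hqQ : q ∈ Q
          · refine clause_answer_win (hmemcl q hqQ) (hB3 q hqQ) ?_
            intro φc hψq
            exact hposother q hqQ hqne φc hψq
          · have hqQs : q ∈ Qs := by
              rcases hq.1 with h | h
              · exact absurd h hqQ
              · exact h
            refine AttackerWins.attack
              (e' := fun k => if k = 0
                then min
                  ((fun k => if k = 3
                    then min ((dexpr (clausesConj cl)).toE 2) ((dexpr (clausesConj cl)).toE 3)
                    else (dexpr (clausesConj cl)).toE k) 0)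
                  ((fun k => if k = 3
                    then min ((dexpr (clausesConj cl)).toE 2) ((dexpr (clausesConj cl)).toE 3)
                    else (dexpr (clausesConj cl)).toE k) 3)
                else (fun k => if k = 3
                    then min ((dexpr (clausesConj cl)).toE 2) ((dexpr (clausesConj cl)).toE 3)
                    else (dexpr (clausesConj cl)).toE k) k)
              not_def_attConj
              (show (specGame step).move _ _ from SpecMove.posDecision) ?_ ?_
            · show applyUpdE _
                ((specGame step).weight (SpecPos.attConj p q) (SpecPos.att p {q})) = some _
              rw [show (specGame step).weight (SpecPos.attConj p q) (SpecPos.att p {q}) = uPos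
                from if_pos rfl]
              exact applyUpdE_uPos _
            · refine AttackerWins.mono
                (AttackerWins.srel hwinRE _ (SRel.att (Set.singleton_subset_iff.mpr hqQs))) ?_
              exact posdec_after_answer_le hheadcl hstarsup
        · intro _
          have hwinm := (hB4 qstar hqstarQ φm hψqstar).2
          exact AttackerWins.mono hwinm (revival_budget_le (List.mem_cons_of_mem _
            (List.mem_map.mpr ⟨qstar, hqstarL, hψqstar⟩)))
  -- pos clause
  · intro p q e e' φ hupd hwin hS hobs ih
    intro p0 q0 heq
    cases heq
    have he' : e' = fun k => if k = 0 then min (e 0) (e 3) else e k := by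
      rw [applyUpdE_uPos] at hupd
      exact ((Option.some.injEq _ _).mp hupd).symm
    subst he'
    obtain ⟨hle, hwinφ⟩ := ih.1 p {q} rfl
    have hle0 : ((φ.expr 0 : ℕ) : ℕ∞) ≤ min (e 0) (e 3) := hle 0
    refine ⟨?_, ?_, ?_, ?_⟩
    · intro k
      show (φ.expr k : ℕ∞) ≤ e k
      by_cases h0k : k = 0
      · subst h0k
        exact le_trans hle0 (min_le_left _ _)
      · have hk : ((φ.expr k : ℕ) : ℕ∞) ≤ if k = 0 then min (e 0) (e 3) else e k := hle k
        rwa [if_neg h0k] at hk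
    · show (φ.expr 0 : ℕ∞) ≤ e 3
      exact le_trans hle0 (min_le_right _ _)
    · intro f hf1 hf2
      refine AttackerWins.attack
        (e' := fun k => if k = 0 then min (f 0) (f 3) else f k) not_def_attConj
        (show (specGame step).move _ _ from SpecMove.posDecision) ?_
        (AttackerWins.mono hwinφ ?_)
      · show applyUpdE f ((specGame step).weight (SpecPos.attConj p q) (SpecPos.att p {q}))
          = some (fun k => if k = 0 then min (f 0) (f 3) else f k)
        rw [show (specGame step).weight (SpecPos.attConj p q) (SpecPos.att p {q}) = uPos
          from if_pos rfl]
        exact applyUpdE_uPos f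
      · intro k
        by_cases h0k : k = 0
        · subst h0k
          show (φ.expr 0 : ℕ∞) ≤ min (f 0) (f 3)
          exact le_min (hf1 0) hf2
        · have : ((φ.expr k : ℕ) : ℕ∞) ≤ f k := hf1 k
          show ((φ.expr k : ℕ) : ℕ∞) ≤ if k = 0 then min (f 0) (f 3) else f k
          rwa [if_neg h0k]
    · intro φ0 heq
      cases heq
      exact ⟨hobs, hwinφ⟩
  -- neg clause
  · intro p q e e' φ hne hupd hwin hS hobs ih
    intro p0 q0 heq
    cases heq
    obtain ⟨h5, he'⟩ := applyUpdE_uNeg_inv hupd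
    subst he'
    obtain ⟨hle, hwinφ⟩ := ih.1 q {p} rfl
    have hle0 : ((φ.expr 0 : ℕ) : ℕ∞) ≤ min (e 0) (e 4) := hle 0
    have hle5 : ((φ.expr 5 : ℕ) : ℕ∞) ≤ e 5 - 1 := hle 5
    have h51 : (1 : ℕ∞) ≤ e 5 := ENat.one_le_iff_ne_zero.mpr h5
    refine ⟨?_, ?_, ?_, ?_⟩
    · intro k
      show ((φ.expr k + if k = 5 then 1 else 0 : ℕ) : ℕ∞) ≤ e k
      by_cases h5k : k = 5
      · subst h5k
        simp only [if_pos rfl]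
        push_cast
        exact cast_succ_le h51 hle5
      · simp only [if_neg h5k]
        by_cases h0k : k = 0
        · subst h0k
          simpa using le_trans hle0 (min_le_left _ _)
        · have hk : ((φ.expr k : ℕ) : ℕ∞) ≤
              if k = 0 then min (e 0) (e 4) else if k = 5 then e 5 - 1 else e k := hle k
          rw [if_neg h0k, if_neg h5k] at hk
          simpa using hk
    · show (φ.expr 0 : ℕ∞) ≤ e 4
      exact le_trans hle0 (min_le_right _ _)
    · intro f hf1 hf2
      have hf5' : ((φ.expr 5 + 1 : ℕ) : ℕ∞) ≤ f 5 := hf1 5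
      have hf5 : f 5 ≠ 0 := by
        intro h0
        rw [h0] at hf5'
        have : φ.expr 5 + 1 = 0 := by exact_mod_cast le_antisymm hf5' zero_le
        omega
      refine AttackerWins.attack
        (e' := fun k => if k = 0 then min (f 0) (f 4) else if k = 5 then f 5 - 1 else f k)
        not_def_attConj
        (show (specGame step).move _ _ from SpecMove.negDecision hne) ?_
        (AttackerWins.mono hwinφ ?_)
      · show applyUpdE f ((specGame step).weight (SpecPos.attConj p q) (SpecPos.att q {p}))
          = some (fun k => if k = 0 then min (f 0) (f 4) else if k = 5 then f 5 - 1 else f k)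
        rw [show (specGame step).weight (SpecPos.attConj p q) (SpecPos.att q {p}) = uNeg
          from if_neg hne]
        exact applyUpdE_uNeg hf5
      · intro k
        by_cases h0k : k = 0
        · subst h0k
          show (φ.expr 0 : ℕ∞) ≤ min (f 0) (f 4)
          refine le_min ?_ hf2
          have : ((φ.expr 0 + 0 : ℕ) : ℕ∞) ≤ f 0 := hf1 0
          simpa using this
        · by_cases h5k : k = 5
          · subst h5k
            show ((φ.expr 5 : ℕ) : ℕ∞) ≤
              if (5:Fin 6) = 0 then min (f 0) (f 4) else if (5:Fin 6) = 5 then f 5 - 1 else f 5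
            rw [if_neg (by decide), if_pos rfl]
            exact cast_le_pred hf5'
          · have hk : ((φ.expr k + if k = 5 then 1 else 0 : ℕ) : ℕ∞) ≤ f k := hf1 k
            rw [if_neg h5k] at hk
            show ((φ.expr k : ℕ) : ℕ∞) ≤
              if k = 0 then min (f 0) (f 4) else if k = 5 then f 5 - 1 else f k
            rw [if_neg h0k, if_neg h5k]
            simpa using hk
    · intro φ0 heq
      cases heq

theorem price_soundness' (p : P) (Q : Set P) (e : EnergyE 6) (φ : HML Act)
    (h : Strat step (AttackerWins (specGame step)) (SpecPos.att p Q) e φ) :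
    φ.exprE ≤ e ∧ AttackerWins (specGame step) (SpecPos.att p Q) φ.exprE :=
  (strat_M1 h).1 p Q rfl

end MainProof

/-- **Price soundness** (Lemma 2): if `φ ∈ Strat([p,Q]_a, e)` then `expr φ ≤ e`
and `expr φ ∈ Win_a([p,Q]_a)`. -/
theorem price_soundness {P Act : Type} (step : P → Act → P → Prop)
    (p : P) (Q : Set P) (e : EnergyE 6) (φ : HML Act)
    (h : Strat step (AttackerWins (specGame step)) (SpecPos.att p Q) e φ) :
    φ.exprE ≤ e ∧ AttackerWins (specGame step) (SpecPos.att p Q) φ.exprE := by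
  exact price_soundness' p Q e φ h
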